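/- The node-centric ℓ-walk graph kernel with parameters α = 0 and β = 1 equals the ℓ-step random walk kernel with all weights λᵢ = 1: K⁺_ℓ(G, H; 0, 1) = Σ_{i=0}^{ℓ} Σ_{w ∈ W_i(G)} Σ_{w' ∈ W_i(H)} k_δ(ℓ(w), ℓ(w')). -/

import Mathlib

open Finset

/-- A walk represented as a vertex function with consecutive vertices adjacent. -/
def IsWalk {V : Type*} (G : SimpleGraph V) {i : ℕ} (f : Fin (i+1) → V) : Prop :=
  ∀ j : Fin i, G.Adj (f j.castSucc) (f j.succ)

/-- Walks of length `i` in `G`. -/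
abbrev WalkLen {V : Type*} (G : SimpleGraph V) (i : ℕ) : Type _ :=
  { f : Fin (i+1) → V // IsWalk G f }

/-- Walks of length `i` in `G` starting at `v`. -/
abbrev WalkFrom {V : Type*} (G : SimpleGraph V) (v : V) (i : ℕ) : Type _ :=
  { f : Fin (i+1) → V // f 0 = v ∧ IsWalk G f }

noncomputable instance {V : Type*} (G : SimpleGraph V) [Fintype V] (i : ℕ) :
    Fintype (WalkLen G i) := Fintype.ofFinite _

noncomputable instance {V : Type*} (G : SimpleGraph V) [Fintype V] (v : V) (i : ℕ) :
    Fintype (WalkFrom G v i) := Fintype.ofFinite _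

/-- Label sequence of a walk. -/
def lseq {V S : Type*} (lab : V → S) {i : ℕ} (f : Fin (i+1) → V) : List S :=
  List.ofFn (lab ∘ f)

/-- κ^{(i)}(v): multiset of label sequences of walks of length exactly i from v. -/
noncomputable def kappa {V S : Type*} (G : SimpleGraph V) [Fintype V] (lab : V → S)
    (i : ℕ) (v : V) : Multiset (List S) :=
  (Finset.univ : Finset (WalkFrom G v i)).val.map fun w => lseq lab w.1

/-- κ₊^{(ℓ)}(v): multiset of label sequences of walks of length at most ℓ from v. -/
noncomputable def kappaPlus {V S : Type*} (G : SimpleGraph V) [Fintype V] (lab : V → S)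
    (ℓ : ℕ) (v : V) : Multiset (List S) :=
  ∑ i ∈ Finset.range (ℓ+1), kappa G lab i v

/-- The type of Weisfeiler-Leman labels after i iterations. -/
def WLL (S : Type*) : ℕ → Type _
  | 0 => S
  | (i+1) => WLL S i × Multiset (WLL S i)

/-- Weisfeiler-Leman refinement. -/
def wl {V S : Type*} (G : SimpleGraph V) [Fintype V] [DecidableRel G.Adj] (lab : V → S) :
    (i : ℕ) → V → WLL S i
  | 0, v => lab v
  | (i+1), v => (wl G lab i v, (G.neighborFinset v).val.map (wl G lab i))

/-- Morgan's extended connectivity. -/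
def ec {V : Type*} (G : SimpleGraph V) [Fintype V] [DecidableRel G.Adj] : ℕ → V → ℕ
  | 0, _ => 1
  | (i+1), v => ∑ u ∈ G.neighborFinset v, ec G i u

/-- Vertices of the direct product graph: pairs with matching labels. -/
abbrev ProdVert {V W S : Type*} (labG : V → S) (labH : W → S) : Type _ :=
  { p : V × W // labG p.1 = labH p.2 }

/-- The direct product graph of two labeled graphs. -/
def prodGraph {V W S : Type*} (G : SimpleGraph V) (H : SimpleGraph W)
    (labG : V → S) (labH : W → S) : SimpleGraph (ProdVert labG labH) where
  Adj p q := G.Adj p.1.1 q.1.1 ∧ H.Adj p.1.2 q.1.2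
  symm := ⟨fun _ _ h => ⟨h.1.symm, h.2.symm⟩⟩
  loopless := ⟨fun _ h => h.1.ne rfl⟩

open Classical in
/-- k_i(u,v): pairs of length-i walks from u and v with matching label sequences. -/
noncomputable def kwalk {V W S : Type*} (G : SimpleGraph V) (H : SimpleGraph W)
    [Fintype V] [Fintype W] (labG : V → S) (labH : W → S) (i : ℕ) (u : V) (v : W) : ℕ :=
  ∑ w : WalkFrom G u i, ∑ w' : WalkFrom H v i,
    ∏ j : Fin (i+1), if labG (w.1 j) = labH (w'.1 j) then 1 else 0


/-- k⁺_i(u,v) for nodes of two labeled graphs. -/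
noncomputable def kplus2 {V W S : Type*} (G : SimpleGraph V) (H : SimpleGraph W)
    [Fintype V] [Fintype W] (labG : V → S) (labH : W → S) (i : ℕ) (u : V) (v : W) : ℕ :=
  ∑ j ∈ Finset.range (i+1), kwalk G H labG labH j u v

/-- The generalized i-walk node kernel k̂⁺_i(u,v;α) across two graphs. -/
noncomputable def khat2 {V W S : Type*} (G : SimpleGraph V) (H : SimpleGraph W)
    [Fintype V] [Fintype W] (labG : V → S) (labH : W → S) (i : ℕ) (α : ℝ)
    (u : V) (v : W) : ℝ :=
  Real.exp (-α * ((kplus2 G G labG labG i u u : ℝ) + (kplus2 H H labH labH i v v : ℝ)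
    - 2 * (kplus2 G H labG labH i u v : ℝ)))

/-- The node-centric ℓ-walk graph kernel K⁺_ℓ(G,H;α,β). -/
noncomputable def Kncw {V W S : Type*} (G : SimpleGraph V) (H : SimpleGraph W)
    [Fintype V] [Fintype W] (labG : V → S) (labH : W → S) (ℓ : ℕ) (α β : ℝ) : ℝ :=
  ∑ i ∈ Finset.range (ℓ+1), ∑ u : V, ∑ v : W,
    khat2 G H labG labH i α u v * (kwalk G H labG labH i u v : ℝ) ^ β


open Classical in
lemma walkLen_sum_split {V' : Type*} [Fintype V'] (G' : SimpleGraph V') (i : ℕ)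
    (F : (Fin (i+1) → V') → ℝ) :
    (∑ w : WalkLen G' i, F w.1) = ∑ u : V', ∑ w : WalkFrom G' u i, F w.1 := by
  conv_rhs => rw [← Finset.sum_sigma (f := fun p : (Σ u : V', WalkFrom G' u i) => F p.2.1)]
  rw [Finset.univ_sigma_univ]
  refine (Fintype.sum_bijective (fun p : Σ u : V', WalkFrom G' u i =>
    (⟨p.2.1, p.2.2.2⟩ : WalkLen G' i)) ?_ _ _ (fun p => rfl)).symm
  constructor
  · rintro ⟨u, f, hf, hw⟩ ⟨u', f', hf', hw'⟩ h
    simp only [Subtype.mk.injEq] at h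
    subst hf hf'
    simp [Sigma.ext_iff, h, Subtype.heq_iff_coe_eq]
  · rintro ⟨f, hf⟩
    exact ⟨⟨f 0, f, rfl, hf⟩, rfl⟩
open Classical in
/-- K⁺_ℓ(G,H;0,1) equals the ℓ-step random walk kernel with unit weights,
which counts the pairs of walks of equal length at most ℓ with matching label sequences. -/
theorem stmt_18 {V W S : Type*} [Fintype V] [Fintype W]
    (G : SimpleGraph V) (H : SimpleGraph W) (labG : V → S) (labH : W → S) (ℓ : ℕ) :
    Kncw G H labG labH ℓ 0 1 =
      ∑ i ∈ Finset.range (ℓ+1), ∑ w : WalkLen G i, ∑ w' : WalkLen H i,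
        (if lseq labG w.1 = lseq labH w'.1 then (1 : ℝ) else 0) := by
  classical
  unfold Kncw
  refine Finset.sum_congr rfl fun i _ => ?_
  refine Eq.trans ?_ (walkLen_sum_split G i (fun f : Fin (i+1) → V => ∑ w' : WalkLen H i,
    if lseq labG f = lseq labH w'.1 then (1:ℝ) else 0)).symm
  refine Finset.sum_congr rfl fun u _ => ?_
  have hH : ∀ w : WalkFrom G u i,
      (∑ w' : WalkLen H i, if lseq labG w.1 = lseq labH w'.1 then (1:ℝ) else 0)
      = ∑ v : W, ∑ w' : WalkFrom H v i, if lseq labG w.1 = lseq labH w'.1 then (1:ℝ) else 0 :=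
    fun w => walkLen_sum_split H i (fun f => if lseq labG w.1 = lseq labH f then (1:ℝ) else 0)
  simp only [hH]
  rw [Finset.sum_comm]
  refine Finset.sum_congr rfl fun v _ => ?_
  have h1 : khat2 G H labG labH i 0 u v = 1 := by simp [khat2]
  rw [h1, one_mul, Real.rpow_one, kwalk]
  push_cast
  refine Finset.sum_congr rfl fun w _ => Finset.sum_congr rfl fun w' _ => ?_
  have hiff : lseq labG w.1 = lseq labH w'.1 ↔ ∀ j, labG (w.1 j) = labH (w'.1 j) := by
    simp [lseq, List.ofFn_inj', funext_iff, Fin.forall_fin_succ]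
  by_cases h : lseq labG w.1 = lseq labH w'.1
  · rw [if_pos h]
    rw [hiff] at h
    simp [h]
  · rw [if_neg h]
    rw [hiff, not_forall] at h
    obtain ⟨j, hj⟩ := h
    exact Finset.prod_eq_zero (Finset.mem_univ j) (by simp [hj])
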